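/- For every t ∈ (0, 1) with |t − 1/2| ≥ 1/4, one has J(t) − J(1/2) < −0.005, where J(1/2) = log 2. -/

import Mathlib

/-- The entropy-like function `I(t) = (t-1) log(1-t) - t log t`. -/
noncomputable def Ifun (t : ℝ) : ℝ := (t - 1) * Real.log (1 - t) - t * Real.log t

/-- `J(t) = I(t) + (2t-1)²/2`. -/
noncomputable def Jfun (t : ℝ) : ℝ := Ifun t + (2 * t - 1) ^ 2 / 2

/-!
`J` is symmetric about `1/2`, and `J'(t) = log(1-t) - log t + 4t - 2 ≤ 0` on `[1/2, 1)` because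
`log((1+x)/(1-x)) = 2 (x + x³/3 + …) ≥ 2x` with `x = 2t - 1`. Hence away from `1/2` we have
`J(t) ≤ J(3/4) = log 2 / 2 - (3/4) log(3/4) + 1/8 ≈ log 2 - 0.0058`.
-/

open Real Set

theorem Ifun_eq_negMulLog_add (t : ℝ) : Ifun t = negMulLog t + negMulLog (1 - t) := by
  simp only [Ifun, negMulLog]; ring

theorem Jfun_one_sub (t : ℝ) : Jfun (1 - t) = Jfun t := by
  simp only [Jfun, Ifun_eq_negMulLog_add, sub_sub_cancel]; ring

theorem Jfun_half : Jfun (1 / 2) = log 2 := by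
  have h : log (1 / 2 : ℝ) = -log 2 := by rw [one_div, log_inv]
  simp only [Jfun, Ifun, show (1 : ℝ) - 1 / 2 = 1 / 2 by norm_num, h]; ring

theorem Jfun_three_quarters : Jfun (3 / 4) = log 2 / 2 - 3 / 4 * log (3 / 4) + 1 / 8 := by
  have h : log (1 / 4 : ℝ) = -(2 * log 2) := by
    rw [one_div, log_inv, show (4 : ℝ) = 2 ^ 2 by norm_num, log_pow]; push_cast; ring
  simp only [Jfun, Ifun, show (1 : ℝ) - 3 / 4 = 1 / 4 by norm_num, h]; ring

theorem hasDerivAt_Jfun {t : ℝ} (h0 : 0 < t) (h1 : t < 1) :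
    HasDerivAt Jfun (log (1 - t) - log t + 4 * t - 2) t := by
  have hI := (hasDerivAt_negMulLog h0.ne').add
    ((hasDerivAt_negMulLog (sub_pos.2 h1).ne').comp t ((hasDerivAt_id t).const_sub 1))
  have hQ := (((hasDerivAt_id t).const_mul 2).sub_const 1).pow 2 |>.div_const 2
  have hJ : Jfun = negMulLog + negMulLog ∘ (1 - ·) + fun x => (2 * x - 1) ^ 2 / 2 := by
    funext x; simp only [Jfun, Ifun_eq_negMulLog_add, Pi.add_apply, Function.comp]
  rw [hJ]
  exact (hI.add hQ).congr_deriv (by simp only [id, Nat.cast_ofNat]; ring)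

theorem two_mul_le_log_one_add_sub_log_one_sub {x : ℝ} (h0 : 0 ≤ x) (h1 : x < 1) :
    2 * x ≤ log (1 + x) - log (1 - x) := by
  have hs := hasSum_log_sub_log_of_abs_lt_one (abs_lt.2 ⟨by linarith, h1⟩)
  simpa using le_hasSum hs 0 fun k _ => by positivity

theorem log_one_sub_sub_log_le_of_half_le {t : ℝ} (h0 : 1 / 2 ≤ t) (h1 : t < 1) :
    log (1 - t) - log t ≤ 2 * (1 - 2 * t) := by
  have h := two_mul_le_log_one_add_sub_log_one_sub (x := 2 * t - 1) (by linarith) (by linarith)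
  rw [show 1 + (2 * t - 1) = 2 * t by ring, show 1 - (2 * t - 1) = 2 * (1 - t) by ring,
    log_mul two_ne_zero (by linarith), log_mul two_ne_zero (by linarith)] at h
  linarith

theorem Jfun_antitoneOn : AntitoneOn Jfun (Ico (1 / 2) 1) := by
  have hJ' {t : ℝ} (ht : t ∈ Ico (1 / 2 : ℝ) 1) := hasDerivAt_Jfun (by linarith [ht.1]) ht.2
  refine antitoneOn_of_hasDerivWithinAt_nonpos (f' := fun t => log (1 - t) - log t + 4 * t - 2)
    (convex_Ico _ _) (fun t ht => (hJ' ht).continuousAt.continuousWithinAt) ?_ ?_ <;>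
    rw [interior_Ico]
  · exact fun t ht => (hJ' (Ioo_subset_Ico_self ht)).hasDerivWithinAt
  · exact fun t ht => by linarith [log_one_sub_sub_log_le_of_half_le ht.1.le ht.2]

theorem Jfun_le_Jfun_three_quarters {t : ℝ} (ht : t ∈ Ioo 0 1) (h : 1 / 4 ≤ |t - 1 / 2|) :
    Jfun t ≤ Jfun (3 / 4) := by
  have h34 : (3 / 4 : ℝ) ∈ Ico (1 / 2) 1 := by norm_num
  rcases le_abs.1 h with h | h
  · exact Jfun_antitoneOn h34 ⟨by linarith, ht.2⟩ (by linarith)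
  · rw [← Jfun_one_sub]
    exact Jfun_antitoneOn h34 ⟨by linarith, by linarith [ht.1]⟩ (by linarith)

/-- The margin in the theorem is below `10⁻³`, so `log (3/4) = -0.28768…` is needed to that
accuracy: five terms of the series of `log (1 - x)` at `x = 1/4`. -/
theorem neg_lt_log_three_quarters : -0.288 < log (3 / 4 : ℝ) := by
  have h := abs_log_sub_add_sum_range_le (show |(1 / 4 : ℝ)| < 1 by norm_num) 5
  norm_num [Finset.sum_range_succ] at h
  linarith [(abs_le.1 h).1]

theorem Jfun_gap_away_from_half :
    Jfun (1 / 2) = Real.log 2 ∧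
    ∀ t ∈ Set.Ioo (0 : ℝ) 1, 1 / 4 ≤ |t - 1 / 2| →
      Jfun t - Jfun (1 / 2) < -0.005 := by
  refine ⟨Jfun_half, fun t ht h => ?_⟩
  have hle := Jfun_le_Jfun_three_quarters ht h
  rw [Jfun_three_quarters] at hle
  linarith [Jfun_half, neg_lt_log_three_quarters, log_two_gt_d9]
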